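/- Let N ≥ 3, v, v_* ∈ ℝ^N with v ≠ v_*, and α ≥ 2. With R_α(x) = ∫_{u ∈ S^{N−2}} [ (1 + |v|²(1−x²) + |v_*|² x² + 2x√(1−x²) |v−v_*| (u·v_*))^α − (1+|v|²)^α ] du, the second derivative of R_α satisfies: there is a constant C_α > 0 depending only on α and N such that |R''_α(x)| ≤ C_α ⟨v⟩^{2α} ⟨v_*⟩^{2α} for all x ∈ [0, √2/2]. -/

import Mathlib

open MeasureTheory Real Set
open scoped InnerProductSpace

noncomputable section

/-- `ℝ^N` as a Euclidean space. -/
abbrev V (N : ℕ) : Type := EuclideanSpace ℝ (Fin N)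

/-- The surface measure on the unit sphere of `ℝ^n`. -/
def sphVol (n : ℕ) : Measure (Metric.sphere (0 : EuclideanSpace ℝ (Fin n)) 1) :=
  (volume : Measure (EuclideanSpace ℝ (Fin n))).toSphere

/-- `⟨v⟩ = (1+|v|²)^{1/2}`. -/
def jap {N : ℕ} (v : V N) : ℝ := Real.sqrt (1 + ‖v‖ ^ 2)

/-- The function
`R_α(x) = ∫_{S^{N-2}} [(1 + |v|²(1-x²) + |v_*|²x² + 2x√(1-x²)|v-v_*|(u·v_*))^α - (1+|v|²)^α] du`,
where the unit sphere `S^{N-2}` of the hyperplane orthogonal to `v - v_*` is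
parametrized by a linear isometry `e : ℝ^{N-1} → ℝ^N` onto this hyperplane. -/
def Rfun {N : ℕ} (v vs : V N) (e : EuclideanSpace ℝ (Fin (N - 1)) →ₗᵢ[ℝ] V N)
    (α : ℝ) (x : ℝ) : ℝ :=
  ∫ u : Metric.sphere (0 : EuclideanSpace ℝ (Fin (N - 1))) 1,
    ((1 + ‖v‖ ^ 2 * (1 - x ^ 2) + ‖vs‖ ^ 2 * x ^ 2
        + 2 * x * Real.sqrt (1 - x ^ 2) * ‖v - vs‖ *
          ⟪(e (u : EuclideanSpace ℝ (Fin (N - 1))) : V N), vs⟫_ℝ) ^ α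
      - (1 + ‖v‖ ^ 2) ^ α) ∂(sphVol (N - 1))

namespace RfunAux

def phiF (a b m t x : ℝ) : ℝ :=
  1 + a * (1 - x ^ 2) + b * x ^ 2 + 2 * x * Real.sqrt (1 - x ^ 2) * m * t
def phiF' (a b m t x : ℝ) : ℝ :=
  2 * (b - a) * x + (1 - 2 * x ^ 2) / Real.sqrt (1 - x ^ 2) * (2 * m * t)
def phiF'' (a b m t x : ℝ) : ℝ :=
  2 * (b - a) + x * (2 * x ^ 2 - 3) / (Real.sqrt (1 - x ^ 2)) ^ 3 * (2 * m * t)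
def FF (a b m t α K x : ℝ) : ℝ := phiF a b m t x ^ α - K
def FF' (a b m t α x : ℝ) : ℝ := α * phiF a b m t x ^ (α - 1) * phiF' a b m t x
def FF'' (a b m t α x : ℝ) : ℝ :=
  α * (α - 1) * phiF a b m t x ^ (α - 2) * phiF' a b m t x ^ 2
    + α * phiF a b m t x ^ (α - 1) * phiF'' a b m t x

lemma hasDerivAt_sqrt_one_sub_sq {x : ℝ} (hx : x ^ 2 < 1) :
    HasDerivAt (fun y : ℝ => Real.sqrt (1 - y ^ 2))
      (-(2 * x) * (1 / (2 * Real.sqrt (1 - x ^ 2)))) x := by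
  have h1 : HasDerivAt (fun y : ℝ => 1 - y ^ 2) (-(2 * x)) x := by
    simpa using (hasDerivAt_pow 2 x).const_sub 1
  have h2 := (Real.hasDerivAt_sqrt (by nlinarith : (1:ℝ) - x ^ 2 ≠ 0)).comp x h1
  exact h2.congr_deriv (by ring)

lemma sqrt_pos_of_sq_lt {x : ℝ} (hx : x ^ 2 < 1) : 0 < Real.sqrt (1 - x ^ 2) :=
  Real.sqrt_pos.2 (by linarith)

lemma hasDerivAt_phiF {a b m t x : ℝ} (hx : x ^ 2 < 1) :
    HasDerivAt (fun y => phiF a b m t y) (phiF' a b m t x) x := by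
  have hs0 : Real.sqrt (1 - x ^ 2) ≠ 0 := (sqrt_pos_of_sq_lt hx).ne'
  have hs2 : Real.sqrt (1 - x ^ 2) ^ 2 = 1 - x ^ 2 := Real.sq_sqrt (by nlinarith)
  have h1 : HasDerivAt (fun y : ℝ => 1 - y ^ 2) (-(2 * x)) x := by
    simpa using (hasDerivAt_pow 2 x).const_sub 1
  have hs := hasDerivAt_sqrt_one_sub_sq hx
  have h2 : HasDerivAt (fun y : ℝ => 2 * y * Real.sqrt (1 - y ^ 2) * m * t)
      ((2 * Real.sqrt (1 - x ^ 2) + 2 * x * (-(2 * x) * (1 / (2 * Real.sqrt (1 - x ^ 2))))) * m * t)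
      x := by
    simpa using ((((hasDerivAt_id x).const_mul 2).mul hs).mul_const m).mul_const t
  have h3 := ((((h1.const_mul a).const_add 1).add ((hasDerivAt_pow 2 x).const_mul b)).add h2)
  refine h3.congr_deriv (Eq.symm ?_)
  unfold phiF'
  field_simp
  ring_nf
  linear_combination (-2*m*t) * hs2

lemma hasDerivAt_phiF' {a b m t x : ℝ} (hx : x ^ 2 < 1) :
    HasDerivAt (fun y => phiF' a b m t y) (phiF'' a b m t x) x := by
  have hs0 : Real.sqrt (1 - x ^ 2) ≠ 0 := (sqrt_pos_of_sq_lt hx).ne'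
  have hs2 : Real.sqrt (1 - x ^ 2) ^ 2 = 1 - x ^ 2 := Real.sq_sqrt (by nlinarith)
  have hnum : HasDerivAt (fun y : ℝ => 1 - 2 * y ^ 2) (-(2 * (2 * x))) x := by
    simpa [mul_comm] using ((hasDerivAt_pow 2 x).const_mul 2).const_sub 1
  have hs := hasDerivAt_sqrt_one_sub_sq hx
  have hdiv := (hnum.div hs hs0).mul_const (2 * m * t)
  have hlin : HasDerivAt (fun y : ℝ => 2 * (b - a) * y) (2 * (b - a)) x := by
    simpa using (hasDerivAt_id x).const_mul (2 * (b - a))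
  have h := hlin.add hdiv
  refine h.congr_deriv (Eq.symm ?_)
  unfold phiF''
  field_simp
  ring_nf
  linear_combination (4*x*m*t) * hs2

lemma hasDerivAt_FF {a b m t α K x : ℝ} (hα : 1 ≤ α) (hx : x ^ 2 < 1) :
    HasDerivAt (fun y => FF a b m t α K y) (FF' a b m t α x) x := by
  have h := ((hasDerivAt_phiF (a := a) (b := b) (m := m) (t := t) hx).rpow_const
    (Or.inr hα)).sub_const K
  refine h.congr_deriv (Eq.symm ?_)
  unfold FF'
  ring

lemma hasDerivAt_FF' {a b m t α x : ℝ} (hα : 2 ≤ α) (hx : x ^ 2 < 1) :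
    HasDerivAt (fun y => FF' a b m t α y) (FF'' a b m t α x) x := by
  have hG := (hasDerivAt_phiF (a := a) (b := b) (m := m) (t := t) hx).rpow_const
    (Or.inr (by linarith : 1 ≤ α - 1))
  have h := (hG.const_mul α).mul (hasDerivAt_phiF' (a := a) (b := b) (m := m) (t := t) hx)
  refine h.congr_deriv (Eq.symm ?_)
  unfold FF''
  rw [show α - 1 - 1 = α - 2 by ring]
  ring

/-- Abstract first-derivative bound. -/
lemma abs_d1_le {φ φ' M α : ℝ} (hM0 : 0 ≤ M) (hφ1 : 1 ≤ φ) (hφu : φ ≤ 1 + 2 * M)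
    (hφ' : |φ'| ≤ 4 * M) (hα : 2 ≤ α) :
    |α * φ ^ (α - 1) * φ'| ≤ 2 * α * (1 + 2 * M) ^ α := by
  set P := 1 + 2 * M with hP
  have hP0 : (0:ℝ) < P := by positivity
  have hφ0 : (0:ℝ) ≤ φ := by linarith
  have hα0 : (0:ℝ) ≤ α := by linarith
  have hrp : φ ^ (α - 1) ≤ P ^ (α - 1) := Real.rpow_le_rpow hφ0 hφu (by linarith)
  have hPP : P ^ (α - 1) * P = P ^ α := by
    rw [← Real.rpow_add_one hP0.ne' (α - 1)]; norm_num
  rw [abs_mul, abs_mul, abs_of_nonneg hα0, abs_of_nonneg (Real.rpow_nonneg hφ0 _)]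
  calc α * φ ^ (α - 1) * |φ'|
      ≤ α * P ^ (α - 1) * (4 * M) := by
        have := mul_le_mul (mul_le_mul_of_nonneg_left hrp hα0) hφ' (abs_nonneg _)
          (by positivity)
        simpa [mul_assoc] using this
    _ ≤ α * P ^ (α - 1) * (2 * P) := by
        have h1 : 4 * M ≤ 2 * P := by rw [hP]; linarith
        have hPn : (0:ℝ) ≤ P ^ (α - 1) := Real.rpow_nonneg hP0.le _
        nlinarith [mul_nonneg hα0 hPn]
    _ = 2 * α * (P ^ (α - 1) * P) := by ring
    _ = 2 * α * P ^ α := by rw [hPP]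

/-- Abstract second-derivative bound. -/
lemma abs_d2_le {φ φ' φ'' M α : ℝ} (hM0 : 0 ≤ M) (hφ1 : 1 ≤ φ) (hφu : φ ≤ 1 + 2 * M)
    (hφ' : |φ'| ≤ 4 * M) (hφ'' : |φ''| ≤ 36 * M) (hα : 2 ≤ α) :
    |α * (α - 1) * φ ^ (α - 2) * φ' ^ 2 + α * φ ^ (α - 1) * φ''|
      ≤ (4 * α ^ 2 + 18 * α) * (1 + 2 * M) ^ α := by
  set P := 1 + 2 * M with hP
  have hP0 : (0:ℝ) < P := by positivity
  have hφ0 : (0:ℝ) ≤ φ := by linarith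
  have hα0 : (0:ℝ) ≤ α := by linarith
  have hαα : (0:ℝ) ≤ α * (α - 1) := by nlinarith
  have hrp1 : φ ^ (α - 1) ≤ P ^ (α - 1) := Real.rpow_le_rpow hφ0 hφu (by linarith)
  have hrp2 : φ ^ (α - 2) ≤ P ^ (α - 2) := Real.rpow_le_rpow hφ0 hφu (by linarith)
  have hPa1 : P ^ (α - 1) * P = P ^ α := by
    rw [← Real.rpow_add_one hP0.ne' (α - 1)]; norm_num
  have hPa2 : P ^ (α - 2) * P ^ (2:ℕ) = P ^ α := by
    rw [show (P:ℝ) ^ (2:ℕ) = P ^ ((2:ℕ):ℝ) from (Real.rpow_natCast P 2).symm,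
      ← Real.rpow_add hP0]
    norm_num
  have hφ'sq : φ' ^ 2 ≤ (4 * M) ^ 2 := by
    have h := abs_le.1 hφ'
    exact sq_le_sq' h.1 h.2
  have hT1 : α * (α - 1) * φ ^ (α - 2) * φ' ^ 2 ≤ 4 * α ^ 2 * P ^ α := by
    have hP2 : (4 * M) ^ 2 ≤ 4 * P ^ (2:ℕ) := by rw [hP]; nlinarith
    have hPn2 : (0:ℝ) ≤ P ^ (α - 2) := Real.rpow_nonneg hP0.le _
    calc α * (α - 1) * φ ^ (α - 2) * φ' ^ 2
        ≤ α * (α - 1) * P ^ (α - 2) * (4 * P ^ (2:ℕ)) := by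
          have := mul_le_mul (mul_le_mul_of_nonneg_left hrp2 hαα)
            (hφ'sq.trans hP2) (sq_nonneg _) (by positivity)
          simpa [mul_assoc] using this
      _ = 4 * (α * (α - 1)) * (P ^ (α - 2) * P ^ (2:ℕ)) := by ring
      _ = 4 * (α * (α - 1)) * P ^ α := by rw [hPa2]
      _ ≤ 4 * α ^ 2 * P ^ α := by
          have := Real.rpow_nonneg hP0.le α
          nlinarith
  have hT2 : |α * φ ^ (α - 1) * φ''| ≤ 18 * α * P ^ α := by
    rw [abs_mul, abs_mul, abs_of_nonneg hα0, abs_of_nonneg (Real.rpow_nonneg hφ0 _)]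
    calc α * φ ^ (α - 1) * |φ''|
        ≤ α * P ^ (α - 1) * (36 * M) := by
          have := mul_le_mul (mul_le_mul_of_nonneg_left hrp1 hα0) hφ'' (abs_nonneg _)
            (by positivity)
          simpa [mul_assoc] using this
      _ ≤ α * P ^ (α - 1) * (18 * P) := by
          have : 36 * M ≤ 18 * P := by rw [hP]; linarith
          have hPn : (0:ℝ) ≤ P ^ (α - 1) := Real.rpow_nonneg hP0.le _
          nlinarith [mul_nonneg hα0 hPn]
      _ = 18 * α * (P ^ (α - 1) * P) := by ring
      _ = 18 * α * P ^ α := by rw [hPa1]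
  have habs1 : |α * (α - 1) * φ ^ (α - 2) * φ' ^ 2| = α * (α - 1) * φ ^ (α - 2) * φ' ^ 2 := by
    apply abs_of_nonneg
    have := Real.rpow_nonneg hφ0 (α - 2)
    positivity
  calc |α * (α - 1) * φ ^ (α - 2) * φ' ^ 2 + α * φ ^ (α - 1) * φ''|
      ≤ |α * (α - 1) * φ ^ (α - 2) * φ' ^ 2| + |α * φ ^ (α - 1) * φ''| := abs_add_le _ _
    _ ≤ 4 * α ^ 2 * P ^ α + 18 * α * P ^ α := by rw [habs1]; exact add_le_add hT1 hT2
    _ = (4 * α ^ 2 + 18 * α) * P ^ α := by ring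

section Bounds
variable {a b m t B x : ℝ} (ha : 0 ≤ a) (hb : 0 ≤ b) (hm : 0 ≤ m) (hB : 0 ≤ B)
  (ht : |t| ≤ B) (hx : |x| ≤ 3/4)

lemma sqrt_lb (hx : |x| ≤ 3/4) : (1:ℝ)/2 ≤ Real.sqrt (1 - x ^ 2) := by
  have h1 := abs_le.1 hx
  have : ((1:ℝ)/2) ^ 2 ≤ 1 - x ^ 2 := by nlinarith [h1.1, h1.2]
  calc (1:ℝ)/2 = Real.sqrt (((1:ℝ)/2) ^ 2) := by
        rw [Real.sqrt_sq (by norm_num)]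
    _ ≤ _ := Real.sqrt_le_sqrt this

lemma sqrt_ub : Real.sqrt (1 - x ^ 2) ≤ 1 := by
  exact Real.sqrt_le_one.mpr (by nlinarith [sq_nonneg x])

include ha hb hm hB ht hx

lemma phiF_le : phiF a b m t x ≤ 1 + 2 * (a + b + m * B) := by
  have hs0 : (0:ℝ) ≤ Real.sqrt (1 - x ^ 2) := Real.sqrt_nonneg _
  have hsu : Real.sqrt (1 - x ^ 2) ≤ 1 := sqrt_ub
  have habs : |2 * x * Real.sqrt (1 - x ^ 2) * m * t|
      = 2 * |x| * Real.sqrt (1 - x ^ 2) * m * |t| := by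
    rw [abs_mul, abs_mul, abs_mul, abs_mul, abs_two, abs_of_nonneg hs0, abs_of_nonneg hm]
  have hkey : |2 * x * Real.sqrt (1 - x ^ 2) * m * t| ≤ 2 * (m * B) := by
    rw [habs]
    calc 2 * |x| * Real.sqrt (1 - x ^ 2) * m * |t| ≤ 2 * (3/4) * 1 * m * B := by
          gcongr <;> positivity
      _ ≤ 2 * (m * B) := by nlinarith [mul_nonneg hm hB]
  have h1 := (le_abs_self (2 * x * Real.sqrt (1 - x ^ 2) * m * t)).trans hkey
  have h2 := abs_le.1 hx
  unfold phiF
  nlinarith [mul_nonneg ha (sq_nonneg x), mul_nonneg hb (sq_nonneg x),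
    mul_le_mul_of_nonneg_left (show x ^ 2 ≤ 9/16 by nlinarith [h2.1, h2.2]) hb]

lemma abs_phiF'_le : |phiF' a b m t x| ≤ 4 * (a + b + m * B) := by
  have hs0 : (0:ℝ) < Real.sqrt (1 - x ^ 2) := lt_of_lt_of_le (by norm_num) (sqrt_lb hx)
  have h2 := abs_le.1 hx
  have hx2 : x ^ 2 ≤ 9/16 := by nlinarith [h2.1, h2.2]
  have hQ1 : |1 - 2 * x ^ 2| ≤ 1 := by
    rw [abs_le]; constructor <;> nlinarith [sq_nonneg x]
  have hdiv : |(1 - 2 * x ^ 2) / Real.sqrt (1 - x ^ 2)| ≤ 2 := by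
    rw [abs_div, abs_of_nonneg hs0.le, div_le_iff₀ hs0]
    nlinarith [sqrt_lb hx]
  have hmt : |2 * m * t| ≤ 2 * (m * B) := by
    rw [abs_mul, abs_mul, abs_two, abs_of_nonneg hm]
    nlinarith [mul_le_mul_of_nonneg_left ht hm, hm, abs_nonneg t]
  have hQ : |(1 - 2 * x ^ 2) / Real.sqrt (1 - x ^ 2) * (2 * m * t)| ≤ 2 * (2 * (m * B)) := by
    rw [abs_mul]
    exact mul_le_mul hdiv hmt (abs_nonneg _) (by norm_num)
  have hL : |2 * (b - a) * x| ≤ 2 * (a + b) := by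
    rw [abs_mul, abs_mul, abs_two]
    have hba : |b - a| ≤ a + b := abs_le.2 ⟨by linarith, by linarith⟩
    nlinarith [abs_nonneg (b - a), abs_nonneg x,
      mul_le_mul hba hx (abs_nonneg x) (by linarith)]
  calc |phiF' a b m t x|
      ≤ |2 * (b - a) * x| + |(1 - 2 * x ^ 2) / Real.sqrt (1 - x ^ 2) * (2 * m * t)| :=
        abs_add_le _ _
    _ ≤ 2 * (a + b) + 2 * (2 * (m * B)) := add_le_add hL hQ
    _ ≤ 4 * (a + b + m * B) := by nlinarith [mul_nonneg hm hB]

lemma abs_phiF''_le : |phiF'' a b m t x| ≤ 36 * (a + b + m * B) := by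
  have hs0 : (0:ℝ) < Real.sqrt (1 - x ^ 2) := lt_of_lt_of_le (by norm_num) (sqrt_lb hx)
  have h2 := abs_le.1 hx
  have hx2 : x ^ 2 ≤ 9/16 := by nlinarith [h2.1, h2.2]
  have hs3 : (1:ℝ)/8 ≤ Real.sqrt (1 - x ^ 2) ^ 3 := by
    have h := pow_le_pow_left₀ (by norm_num : (0:ℝ) ≤ 1/2) (sqrt_lb hx) 3
    norm_num at h
    linarith
  have hnum : |x * (2 * x ^ 2 - 3)| ≤ 9/4 := by
    rw [abs_mul]
    have h3 : |2 * x ^ 2 - 3| ≤ 3 := by rw [abs_le]; constructor <;> nlinarith [sq_nonneg x]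
    nlinarith [abs_nonneg x, mul_le_mul hx h3 (abs_nonneg _) (by norm_num)]
  have hdiv : |x * (2 * x ^ 2 - 3) / Real.sqrt (1 - x ^ 2) ^ 3| ≤ 18 := by
    rw [abs_div, abs_of_nonneg (by positivity : (0:ℝ) ≤ Real.sqrt (1 - x ^ 2) ^ 3),
      div_le_iff₀ (by positivity)]
    nlinarith [hs3]
  have hmt : |2 * m * t| ≤ 2 * (m * B) := by
    rw [abs_mul, abs_mul, abs_two, abs_of_nonneg hm]
    nlinarith [mul_le_mul_of_nonneg_left ht hm, hm, abs_nonneg t]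
  have hQ : |x * (2 * x ^ 2 - 3) / Real.sqrt (1 - x ^ 2) ^ 3 * (2 * m * t)| ≤ 18 * (2 * (m * B)) := by
    rw [abs_mul]
    exact mul_le_mul hdiv hmt (abs_nonneg _) (by norm_num)
  have hL : |2 * (b - a)| ≤ 2 * (a + b) := by
    rw [abs_mul, abs_two]
    have hba : |b - a| ≤ a + b := abs_le.2 ⟨by linarith, by linarith⟩
    linarith
  calc |phiF'' a b m t x|
      ≤ |2 * (b - a)| + |x * (2 * x ^ 2 - 3) / Real.sqrt (1 - x ^ 2) ^ 3 * (2 * m * t)| :=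
        abs_add_le _ _
    _ ≤ 2 * (a + b) + 18 * (2 * (m * B)) := add_le_add hL hQ
    _ ≤ 36 * (a + b + m * B) := by nlinarith [mul_nonneg hm hB]

variable {α : ℝ} (hα : 2 ≤ α) (hφ1 : 1 ≤ phiF a b m t x)
include hα hφ1

lemma abs_FF'_le : |FF' a b m t α x| ≤ 2 * α * (1 + 2 * (a + b + m * B)) ^ α :=
  abs_d1_le (by positivity) hφ1 (phiF_le ha hb hm hB ht hx)
    (abs_phiF'_le ha hb hm hB ht hx) hα

lemma abs_FF''_le : |FF'' a b m t α x| ≤ (4 * α ^ 2 + 18 * α) * (1 + 2 * (a + b + m * B)) ^ α :=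
  abs_d2_le (by positivity) hφ1 (phiF_le ha hb hm hB ht hx)
    (abs_phiF'_le ha hb hm hB ht hx) (abs_phiF''_le ha hb hm hB ht hx) hα

end Bounds

lemma one_le_phiF {N : ℕ} (v vs ω : V N) (hω : ‖ω‖ = 1) (horth : ⟪ω, v - vs⟫_ℝ = 0)
    {y : ℝ} (hy : y ^ 2 ≤ 1) :
    1 ≤ phiF (‖v‖ ^ 2) (‖vs‖ ^ 2) (‖v - vs‖) (⟪ω, vs⟫_ℝ) y := by
  set s := Real.sqrt (1 - y ^ 2) with hs
  have hs2 : s ^ 2 = 1 - y ^ 2 := Real.sq_sqrt (by linarith)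
  set w : V N := (1 - y ^ 2) • v + (y ^ 2) • vs + (y * s * ‖v - vs‖) • ω with hw
  have hc : ⟪v, ω⟫_ℝ = ⟪vs, ω⟫_ℝ := by
    have h := horth
    rw [inner_sub_right, sub_eq_zero] at h
    rw [(real_inner_comm _ _ : ⟪v, ω⟫_ℝ = ⟪ω, v⟫_ℝ),
      (real_inner_comm _ _ : ⟪vs, ω⟫_ℝ = ⟪ω, vs⟫_ℝ)]
    exact h
  have hm2 : ‖v - vs‖ ^ 2 = ‖v‖ ^ 2 - 2 * ⟪vs, v⟫_ℝ + ‖vs‖ ^ 2 := by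
    rw [← real_inner_self_eq_norm_sq]
    simp only [inner_sub_left, inner_sub_right]
    rw [real_inner_self_eq_norm_sq, real_inner_self_eq_norm_sq, real_inner_comm v vs]
    ring
  have hkey : phiF (‖v‖ ^ 2) (‖vs‖ ^ 2) (‖v - vs‖) (⟪ω, vs⟫_ℝ) y = 1 + ‖w‖ ^ 2 := by
    rw [← real_inner_self_eq_norm_sq (x := w), hw]
    simp only [inner_add_left, inner_add_right, real_inner_smul_left, real_inner_smul_right]
    rw [real_inner_self_eq_norm_sq, real_inner_self_eq_norm_sq,
      real_inner_self_eq_norm_sq, hω]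
    rw [hc]
    unfold phiF
    have cm1 : ⟪ω, vs⟫_ℝ = ⟪vs, ω⟫_ℝ := real_inner_comm _ _
    have cm2 : ⟪ω, v⟫_ℝ = ⟪v, ω⟫_ℝ := real_inner_comm _ _
    have cm3 : ⟪v, vs⟫_ℝ = ⟪vs, v⟫_ℝ := real_inner_comm _ _
    linear_combination (-(y^2)*(‖v‖^2 + ‖vs‖^2 - 2*⟪vs, v⟫_ℝ)) * hs2 + (-(y^2)*s^2) * hm2
      + (y^4 - y^2) * cm3
      + ((2 - y^2)*(y*Real.sqrt (1 - y^2)*‖v - vs‖)) * cm1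
      + ((y^2 - 1)*(y*Real.sqrt (1 - y^2)*‖v - vs‖)) * cm2
      + ((y^2 - 1)*(y*Real.sqrt (1 - y^2)*‖v - vs‖)) * hc
  rw [hkey]
  nlinarith [sq_nonneg ‖w‖]

lemma P_le_aux {a b m nv ns : ℝ} (ha : a = nv ^ 2) (hb : b = ns ^ 2)
    (hm : m ≤ nv + ns) (hnv : 0 ≤ nv) (hns : 0 ≤ ns) :
    1 + 2 * (a + b + m * ns) ≤ 5 * ((1 + a) * (1 + b)) := by
  subst ha hb
  have h1 : m * ns ≤ (nv + ns) * ns := mul_le_mul_of_nonneg_right hm hns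
  nlinarith [sq_nonneg (nv - ns), mul_nonneg (sq_nonneg nv) (sq_nonneg ns),
    mul_nonneg hnv hns]

end RfunAux

set_option maxHeartbeats 2000000 in
/-- for `α ≥ 2`, there is `C_α > 0` depending only on `α` and `N` such
that `|R''_α(x)| ≤ C_α ⟨v⟩^{2α} ⟨v_*⟩^{2α}` for all `x ∈ [0, √2/2]`. -/
theorem Rfun_second_deriv_bound
    (N : ℕ) (hN : 3 ≤ N) (α : ℝ) (hα : 2 ≤ α) :
    ∃ C : ℝ, 0 < C ∧
      ∀ (v vs : V N), v ≠ vs →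
        ∀ e : EuclideanSpace ℝ (Fin (N - 1)) →ₗᵢ[ℝ] V N,
          Set.range e = ((Submodule.span ℝ {v - vs})ᗮ : Set (V N)) →
          ∀ x ∈ Set.Icc (0 : ℝ) (Real.sqrt 2 / 2),
            |deriv (deriv (Rfun v vs e α)) x| ≤ C * jap v ^ (2 * α) * jap vs ^ (2 * α) := by
  classical
  open RfunAux in
  have hα0 : (0:ℝ) ≤ α := by linarith
  haveI : IsFiniteMeasure (sphVol (N - 1)) := by unfold sphVol; infer_instance
  set T : ℝ := ((sphVol (N - 1)) Set.univ).toReal with hT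
  have hT0 : 0 ≤ T := ENNReal.toReal_nonneg
  refine ⟨(4 * α ^ 2 + 18 * α) * 5 ^ α * T + 1, ?_, ?_⟩
  · have h1 : (0:ℝ) ≤ 4 * α ^ 2 + 18 * α := by nlinarith
    have h2 : (0:ℝ) ≤ (5:ℝ) ^ α := (Real.rpow_pos_of_pos (by norm_num) _).le
    nlinarith [mul_nonneg (mul_nonneg h1 h2) hT0]
  intro v vs hne e he x hx
  set μ := sphVol (N - 1) with hμ
  set a : ℝ := ‖v‖ ^ 2 with hadef
  set b : ℝ := ‖vs‖ ^ 2 with hbdef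
  set m : ℝ := ‖v - vs‖ with hmdef
  set B : ℝ := ‖vs‖ with hBdef
  set K : ℝ := (1 + ‖v‖ ^ 2) ^ α with hKdef
  set c : Metric.sphere (0 : EuclideanSpace ℝ (Fin (N - 1))) 1 → ℝ :=
    fun u => ⟪(e (u : EuclideanSpace ℝ (Fin (N - 1))) : V N), vs⟫_ℝ with hcdef
  have ha : 0 ≤ a := sq_nonneg _
  have hb : 0 ≤ b := sq_nonneg _
  have hm : 0 ≤ m := norm_nonneg _
  have hB : 0 ≤ B := norm_nonneg _
  have hRfun : Rfun v vs e α = fun y => ∫ u, FF a b m (c u) α K y ∂μ := rfl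
  have hωn : ∀ u : Metric.sphere (0 : EuclideanSpace ℝ (Fin (N - 1))) 1,
      ‖(e (u : EuclideanSpace ℝ (Fin (N - 1))) : V N)‖ = 1 := by
    intro u
    rw [e.norm_map]
    exact norm_eq_of_mem_sphere u
  have horth : ∀ u : Metric.sphere (0 : EuclideanSpace ℝ (Fin (N - 1))) 1,
      ⟪(e (u : EuclideanSpace ℝ (Fin (N - 1))) : V N), v - vs⟫_ℝ = 0 := by
    intro u
    have hmem : (e (u : EuclideanSpace ℝ (Fin (N - 1))) : V N)
        ∈ ((Submodule.span ℝ {v - vs})ᗮ : Set (V N)) := by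
      rw [← he]; exact ⟨_, rfl⟩
    exact Submodule.mem_orthogonal_singleton_iff_inner_left.1 hmem
  have htb : ∀ u, |c u| ≤ B := by
    intro u
    calc |c u| ≤ ‖(e (u : EuclideanSpace ℝ (Fin (N - 1))) : V N)‖ * ‖vs‖ :=
          abs_real_inner_le_norm _ _
      _ = B := by rw [hωn u, one_mul]
  have hφ1 : ∀ u, ∀ y : ℝ, y ^ 2 ≤ 1 → 1 ≤ phiF a b m (c u) y := fun u y hy =>
    one_le_phiF v vs _ (hωn u) (horth u) hy
  -- continuity in u
  have hccont : Continuous c := by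
    exact (e.continuous.comp continuous_subtype_val).inner continuous_const
  have hb' : b = ‖vs‖ ^ 2 := by rw [hbdef, hBdef]
  clear_value a b m B K c
  have hφc : ∀ y : ℝ, Continuous fun u => phiF a b m (c u) y := by
    intro y; unfold phiF
    exact continuous_const.add (continuous_const.mul hccont)
  have hφ'c : ∀ y : ℝ, Continuous fun u => phiF' a b m (c u) y := by
    intro y; unfold phiF'
    exact continuous_const.add (continuous_const.mul (continuous_const.mul hccont))
  have hφ''c : ∀ y : ℝ, Continuous fun u => phiF'' a b m (c u) y := by
    intro y; unfold phiF''
    exact continuous_const.add (continuous_const.mul (continuous_const.mul hccont))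
  have hFc : ∀ y : ℝ, Continuous fun u => FF a b m (c u) α K y := by
    intro y; unfold FF
    exact ((hφc y).rpow_const fun u => Or.inr hα0).sub continuous_const
  have hF'c : ∀ y : ℝ, Continuous fun u => FF' a b m (c u) α y := by
    intro y; unfold FF'
    exact (continuous_const.mul ((hφc y).rpow_const fun u => Or.inr (by linarith))).mul (hφ'c y)
  have hF''c : ∀ y : ℝ, Continuous fun u => FF'' a b m (c u) α y := by
    intro y; unfold FF''
    exact ((continuous_const.mul ((hφc y).rpow_const fun u => Or.inr (by linarith))).mul
      ((hφ'c y).pow 2)).add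
      ((continuous_const.mul ((hφc y).rpow_const fun u => Or.inr (by linarith))).mul (hφ''c y))
  set M : ℝ := a + b + m * B with hMdef
  have hM0 : 0 ≤ M := by
    rw [hMdef]; exact add_nonneg (add_nonneg ha hb) (mul_nonneg hm hB)
  clear_value M
  set P : ℝ := 1 + 2 * M with hPdef
  clear_value P
  have hball : ∀ x₀ : ℝ, |x₀| < 3/4 → ∀ y ∈ Metric.ball x₀ (3/4 - |x₀|),
      |y| ≤ 3/4 ∧ y ^ 2 < 1 := by
    intro x₀ hx₀ y hy
    rw [Metric.mem_ball, Real.dist_eq] at hy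
    have h1 : |y| < 3/4 := by
      calc |y| = |y - x₀ + x₀| := by ring_nf
        _ ≤ |y - x₀| + |x₀| := abs_add_le _ _
        _ < 3/4 := by linarith
    refine ⟨h1.le, ?_⟩
    nlinarith [abs_nonneg y, sq_abs y]
  have hstep1 : ∀ x₀ : ℝ, |x₀| < 3/4 →
      HasDerivAt (fun y => ∫ u, FF a b m (c u) α K y ∂μ)
        (∫ u, FF' a b m (c u) α x₀ ∂μ) x₀ := by
    intro x₀ hx₀
    have hε : (0:ℝ) < 3/4 - |x₀| := by linarith
    refine (hasDerivAt_integral_of_dominated_loc_of_deriv_le (Metric.ball_mem_nhds x₀ hε)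
      (F := fun y u => FF a b m (c u) α K y) (F' := fun y u => FF' a b m (c u) α y)
      (bound := fun _ => 2 * α * P ^ α)
      (Filter.Eventually.of_forall fun y => (hFc y).aestronglyMeasurable)
      ((hFc x₀).integrable_of_hasCompactSupport (HasCompactSupport.of_compactSpace _))
      ((hF'c x₀).aestronglyMeasurable)
      (MeasureTheory.ae_of_all _ fun u y hy => ?_)
      (integrable_const _)
      (MeasureTheory.ae_of_all _ fun u y hy => ?_)).2
    · obtain ⟨h1, h2⟩ := hball x₀ hx₀ y hy
      rw [Real.norm_eq_abs]
      simp only [hPdef, hMdef]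
      exact abs_FF'_le ha hb hm hB (htb u) h1 hα (hφ1 u y h2.le)
    · exact hasDerivAt_FF (by linarith) (hball x₀ hx₀ y hy).2
  have hstep2 : ∀ x₀ : ℝ, |x₀| < 3/4 →
      HasDerivAt (fun y => ∫ u, FF' a b m (c u) α y ∂μ)
        (∫ u, FF'' a b m (c u) α x₀ ∂μ) x₀ := by
    intro x₀ hx₀
    have hε : (0:ℝ) < 3/4 - |x₀| := by linarith
    refine (hasDerivAt_integral_of_dominated_loc_of_deriv_le (Metric.ball_mem_nhds x₀ hε)
      (F := fun y u => FF' a b m (c u) α y) (F' := fun y u => FF'' a b m (c u) α y)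
      (bound := fun _ => (4 * α ^ 2 + 18 * α) * P ^ α)
      (Filter.Eventually.of_forall fun y => (hF'c y).aestronglyMeasurable)
      ((hF'c x₀).integrable_of_hasCompactSupport (HasCompactSupport.of_compactSpace _))
      ((hF''c x₀).aestronglyMeasurable)
      (MeasureTheory.ae_of_all _ fun u y hy => ?_)
      (integrable_const _)
      (MeasureTheory.ae_of_all _ fun u y hy => ?_)).2
    · obtain ⟨h1, h2⟩ := hball x₀ hx₀ y hy
      rw [Real.norm_eq_abs]
      simp only [hPdef, hMdef]
      exact abs_FF''_le ha hb hm hB (htb u) h1 hα (hφ1 u y h2.le)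
    · exact hasDerivAt_FF' hα (hball x₀ hx₀ y hy).2
  -- x is in the good region
  have hsqrt2 : Real.sqrt 2 < 3/2 := by
    nlinarith [Real.sq_sqrt (by norm_num : (0:ℝ) ≤ 2), Real.sqrt_nonneg 2]
  have hx34 : |x| < 3/4 := by
    rw [abs_of_nonneg hx.1]
    linarith [hx.2]
  have hx21 : x ^ 2 ≤ 1 := by nlinarith [abs_nonneg x, sq_abs x, hx34]
  -- identify the second derivative
  have hEq : deriv (Rfun v vs e α) =ᶠ[nhds x] fun y => ∫ u, FF' a b m (c u) α y ∂μ := by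
    have hopen : {y : ℝ | |y| < 3/4} ∈ nhds x := by
      have : IsOpen {y : ℝ | |y| < 3/4} := isOpen_lt (continuous_abs) continuous_const
      exact this.mem_nhds hx34
    filter_upwards [hopen] with y hy
    rw [hRfun]
    exact (hstep1 y hy).deriv
  have hd2 : deriv (deriv (Rfun v vs e α)) x = ∫ u, FF'' a b m (c u) α x ∂μ := by
    rw [Filter.EventuallyEq.deriv_eq hEq]
    exact (hstep2 x hx34).deriv
  -- the integral bound
  have hbd : |∫ u, FF'' a b m (c u) α x ∂μ| ≤ (4 * α ^ 2 + 18 * α) * P ^ α * T := by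
    rw [← Real.norm_eq_abs]
    apply norm_integral_le_of_norm_le_const
    refine MeasureTheory.ae_of_all _ fun u => ?_
    rw [Real.norm_eq_abs]
    simp only [hPdef, hMdef]
    exact abs_FF''_le ha hb hm hB (htb u) hx34.le hα (hφ1 u x hx21)
  -- convert powers of jap
  have hjv : jap v ^ (2 * α) = (1 + a) ^ α := by
    rw [hadef, jap, Real.sqrt_eq_rpow, ← Real.rpow_mul (by positivity)]
    rw [show (1:ℝ)/2 * (2 * α) = α by ring]
  have hjs : jap vs ^ (2 * α) = (1 + b) ^ α := by
    rw [hb', jap, Real.sqrt_eq_rpow, ← Real.rpow_mul (by positivity)]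
    rw [show (1:ℝ)/2 * (2 * α) = α by ring]
  have hPle : P ≤ 5 * ((1 + a) * (1 + b)) := by
    have hmle : m ≤ ‖v‖ + ‖vs‖ := by rw [hmdef]; exact norm_sub_le _ _
    rw [hPdef, hMdef, hBdef]
    exact P_le_aux hadef hb' hmle (norm_nonneg _) (norm_nonneg _)
  have hP0 : (0:ℝ) ≤ P := by rw [hPdef]; linarith
  have hPα : P ^ α ≤ 5 ^ α * ((1 + a) * (1 + b)) ^ α := by
    have h := Real.rpow_le_rpow hP0 hPle hα0
    rwa [Real.mul_rpow (by norm_num) (by positivity)] at h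
  have hprod : (1 + a) ^ α * (1 + b) ^ α = ((1 + a) * (1 + b)) ^ α :=
    (Real.mul_rpow (by positivity) (by positivity)).symm
  calc |deriv (deriv (Rfun v vs e α)) x|
      = |∫ u, FF'' a b m (c u) α x ∂μ| := by rw [hd2]
    _ ≤ (4 * α ^ 2 + 18 * α) * P ^ α * T := hbd
    _ ≤ (4 * α ^ 2 + 18 * α) * (5 ^ α * ((1 + a) * (1 + b)) ^ α) * T :=
        mul_le_mul_of_nonneg_right (mul_le_mul_of_nonneg_left hPα (by nlinarith)) hT0
    _ = ((4 * α ^ 2 + 18 * α) * 5 ^ α * T) * ((1 + a) * (1 + b)) ^ α := by ring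
    _ ≤ ((4 * α ^ 2 + 18 * α) * 5 ^ α * T + 1) * ((1 + a) * (1 + b)) ^ α := by
        have h0 : (0:ℝ) ≤ ((1 + a) * (1 + b)) ^ α := by positivity
        nlinarith
    _ = ((4 * α ^ 2 + 18 * α) * 5 ^ α * T + 1) * jap v ^ (2 * α) * jap vs ^ (2 * α) := by
        rw [hjv, hjs, ← hprod]; ring
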